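/- arXiv:0906.1018 — 2 statements merged into one kernel-verified Lean document; each statement's English description precedes it below -/
import Mathlib

section
/- For every positive integer n, the product ∏_{1 ≤ i ≤ j ≤ k ≤ n} (i+j+k-1)/(i+j+k-2) is a positive integer. -/
/-!
Telescoping in `i`, the layer `k = n + 1` contributes `∏_{t ≤ n} (n + 2t + 2) / (n + t + 1)`, and
the same recursion shows that the product equals `∏_{t < n} (n+2t+1)! (2t)! / ((3t+1)! (n+t)!)`.
By Legendre's formula the denominator divides the numerator once
`∑_{t<n} (⌊(3t+1)/q⌋ + ⌊(n+t)/q⌋) ≤ ∑_{t<n} (⌊(n+2t+1)/q⌋ + ⌊2t/q⌋)` for every `q ≥ 1`.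
The difference of the summands is `q`-periodic in `t` (the slopes satisfy `3 + 1 = 2 + 2`) and in
`n`, which reduces this inequality to the case `n < q` and to the sum over one period; there every
quotient is at most `2` and the sums can be counted.
-/

/-- The product `∏_{1 ≤ i ≤ j ≤ k ≤ n} (i+j+k-1)/(i+j+k-2)` of rational numbers. -/
def tsppProd (n : ℕ) : ℚ :=
  ∏ k ∈ Finset.Icc 1 n, ∏ j ∈ Finset.Icc 1 k, ∏ i ∈ Finset.Icc 1 j,
    (((i : ℚ) + j + k - 1) / ((i : ℚ) + j + k - 2))

open Finset Nat

theorem Finset.prod_Icc_one_eq_prod_range {M : Type*} [CommMonoid M] (f : ℕ → M) (n : ℕ) :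
    ∏ i ∈ Icc 1 n, f i = ∏ t ∈ range n, f (t + 1) := by
  rw [range_eq_Ico, prod_Ico_add' f 0 n 1, zero_add, Ico_add_one_right_eq_Icc]

theorem prod_Icc_add_div_add_sub_one {K : Type*} [Field K] [LinearOrder K] [IsStrictOrderedRing K]
    {c : K} (hc : 0 < c) (m : ℕ) : ∏ i ∈ Icc 1 m, ((i + c) / (i + c - 1)) = (m + c) / c := by
  induction m with
  | zero => simp [hc.ne']
  | succ m ih =>
    have hmc : (m : K) + c ≠ 0 := by positivity
    have hsucc : ((m + 1 : ℕ) : K) + c - 1 = m + c := by push_cast; ring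
    rw [prod_Icc_succ_top (by omega), ih, hsucc, mul_comm, div_mul_div_cancel₀ hmc]

theorem tsppProd_succ (n : ℕ) :
    tsppProd (n + 1) = tsppProd n * ∏ t ∈ range (n + 1), ((n + 2 * t + 2 : ℚ) / (n + t + 1)) := by
  rw [tsppProd, prod_Icc_succ_top (by omega), ← tsppProd, prod_Icc_one_eq_prod_range]
  congr 1
  refine prod_congr rfl fun t _ => ?_
  calc ∏ i ∈ Icc 1 (t + 1), (((i : ℚ) + ↑(t + 1) + ↑(n + 1) - 1) / (i + ↑(t + 1) + ↑(n + 1) - 2))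
      = ∏ i ∈ Icc 1 (t + 1), ((i + (n + t + 1 : ℚ)) / (i + (n + t + 1) - 1)) :=
        prod_congr rfl fun i _ => by push_cast; ring_nf
    _ = _ := by rw [prod_Icc_add_div_add_sub_one (by positivity)]; push_cast; ring_nf

def tsppFactor (n t : ℕ) : ℚ := ((n + 2 * t + 1)! * (2 * t)! : ℕ) / ((3 * t + 1)! * (n + t)! : ℕ)

theorem tsppFactor_succ_left (n t : ℕ) :
    tsppFactor (n + 1) t = tsppFactor n t * ((n + 2 * t + 2 : ℚ) / (n + t + 1)) := by
  rw [tsppFactor, tsppFactor, show n + 1 + 2 * t + 1 = n + 2 * t + 1 + 1 by ring,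
    show n + 1 + t = n + t + 1 by ring, factorial_succ (n + 2 * t + 1), factorial_succ (n + t)]
  push_cast
  field_simp
  ring

theorem tsppFactor_self (n : ℕ) : tsppFactor n n = 1 := by
  rw [tsppFactor, show n + 2 * n + 1 = 3 * n + 1 by ring, show n + n = 2 * n by ring, mul_comm,
    div_self (by positivity)]

theorem tsppProd_eq_prod_tsppFactor (n : ℕ) : tsppProd n = ∏ t ∈ range n, tsppFactor n t := by
  induction n with
  | zero => simp [tsppProd]
  | succ n ih =>
    rw [tsppProd_succ, ih, prod_congr rfl fun t _ => tsppFactor_succ_left n t, prod_mul_distrib,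
      prod_range_succ (tsppFactor n), tsppFactor_self, mul_one]

theorem tsppProd_eq_div (n : ℕ) :
    tsppProd n = (∏ t ∈ range n, ((n + 2 * t + 1)! * (2 * t)!) : ℕ) /
      (∏ t ∈ range n, ((3 * t + 1)! * (n + t)!) : ℕ) := by
  rw [tsppProd_eq_prod_tsppFactor, Nat.cast_prod, Nat.cast_prod, ← prod_div_distrib]
  rfl

theorem Nat.prod_factorial_dvd_prod_factorial {ι κ : Type*} {s : Finset ι} {t : Finset κ}
    {a : ι → ℕ} {b : κ → ℕ} (h : ∀ q, 0 < q → ∑ i ∈ s, a i / q ≤ ∑ k ∈ t, b k / q) :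
    ∏ i ∈ s, (a i)! ∣ ∏ k ∈ t, (b k)! := by
  rw [← factorization_prime_le_iff_dvd (prod_ne_zero_iff.mpr fun i _ => factorial_ne_zero _)
    (prod_ne_zero_iff.mpr fun k _ => factorial_ne_zero _)]
  intro p hp
  set B := ∑ i ∈ s, a i + ∑ k ∈ t, b k + 1
  have legendre {x : ℕ} (hx : x < B) : (x !).factorization p = ∑ m ∈ Ico 1 B, x / p ^ m :=
    factorization_factorial hp ((log_le_self p x).trans_lt hx)
  have ha : ∀ i ∈ s, a i < B := fun i hi => by
    have := single_le_sum (fun _ _ => Nat.zero_le _) hi (f := a); omega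
  have hb : ∀ k ∈ t, b k < B := fun k hk => by
    have := single_le_sum (fun _ _ => Nat.zero_le _) hk (f := b); omega
  rw [factorization_prod fun i _ => factorial_ne_zero _,
    factorization_prod fun k _ => factorial_ne_zero _, sum_apply', sum_apply',
    sum_congr rfl fun i hi => legendre (ha i hi), sum_congr rfl fun k hk => legendre (hb k hk),
    sum_comm, sum_comm (s := t)]
  exact sum_le_sum fun m _ => h (p ^ m) (pow_pos hp.pos m)

theorem Nat.div_eq_ite_add_ite {x q : ℕ} (h : x < 3 * q) :
    x / q = (if q ≤ x then 1 else 0) + (if 2 * q ≤ x then 1 else 0) := by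
  rcases lt_or_ge x q with h1 | h1
  · rw [Nat.div_eq_of_lt h1, if_neg (by omega), if_neg (by omega)]
  rcases lt_or_ge x (2 * q) with h2 | h2
  · rw [Nat.div_eq_of_lt_le (k := 1) (by omega) (by omega), if_pos h1, if_neg (by omega)]
  · rw [Nat.div_eq_of_lt_le (k := 2) (by omega) (by omega), if_pos h1, if_pos h2]

-- `(c - a + b - 1) / b` is `⌈(c - a) / b⌉`, and `0` when `c ≤ a` by truncated subtraction.
theorem Finset.card_filter_range_le_add_mul {a b c s : ℕ} (hb : 0 < b) :
    #{t ∈ range s | c ≤ a + b * t} = s - (c - a + b - 1) / b := by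
  have hiff : ∀ t, c ≤ a + b * t ↔ (c - a + b - 1) / b ≤ t := fun t => by
    rw [Nat.div_le_iff_le_mul_add_pred hb]; omega
  simp only [hiff, range_eq_Ico, Ico_filter_le, card_Ico, zero_max]

theorem Finset.sum_range_add_mul_div {a b q s : ℕ} (hb : 0 < b)
    (h : ∀ t < s, a + b * t < 3 * q) :
    ∑ t ∈ range s, (a + b * t) / q =
      (s - (q - a + b - 1) / b) + (s - (2 * q - a + b - 1) / b) := by
  rw [sum_congr rfl fun t ht => Nat.div_eq_ite_add_ite (h t (mem_range.mp ht)),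
    sum_add_distrib, sum_boole, sum_boole, card_filter_range_le_add_mul hb,
    card_filter_range_le_add_mul hb]
  simp

theorem Function.Periodic.sum_range_add {M : Type*} [AddCommMonoid M] {f : ℕ → M} {q : ℕ}
    (hf : Function.Periodic f q) (s : ℕ) :
    ∑ t ∈ range (q + s), f t = ∑ t ∈ range q, f t + ∑ t ∈ range s, f t := by
  rw [Finset.sum_range_add]
  exact congrArg _ (sum_congr rfl fun t _ => by rw [add_comm, hf t])

def tsppGap (q n t : ℕ) : ℤ :=
  ((n + 2 * t + 1) / q + 2 * t / q : ℕ) - ((3 * t + 1) / q + (n + t) / q : ℕ)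

section
variable {q : ℕ}

theorem periodic_tsppGap (hq : 0 < q) (n : ℕ) : Function.Periodic (tsppGap q n) q := by
  intro t
  have shift (x k : ℕ) : (x + k * q) / q = x / q + k := Nat.add_mul_div_right x k hq
  rw [tsppGap, tsppGap, show n + 2 * (t + q) + 1 = n + 2 * t + 1 + 2 * q by ring,
    show 2 * (t + q) = 2 * t + 2 * q by ring, show 3 * (t + q) + 1 = 3 * t + 1 + 3 * q by ring,
    show n + (t + q) = n + t + 1 * q by ring, shift, shift, shift, shift]
  push_cast
  ring

theorem periodic_tsppGap_left (hq : 0 < q) : Function.Periodic (tsppGap q) q := by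
  intro n
  funext t
  have shift (x : ℕ) : (x + 1 * q) / q = x / q + 1 := Nat.add_mul_div_right x 1 hq
  rw [tsppGap, tsppGap, show n + q + 2 * t + 1 = n + 2 * t + 1 + 1 * q by ring,
    show n + q + t = n + t + 1 * q by ring, shift, shift]
  push_cast
  ring

-- For `r < q` and `t < q` every quotient below is `0`, `1` or `2`, so the sums are counted
-- explicitly; `s = r` is the case `n < q`, and `s = q` is one full period in `t`.
theorem sum_range_tsppGap_nonneg_of_lt {r s : ℕ} (hr : r < q) (hs : s = r ∨ s = q) :
    0 ≤ ∑ t ∈ range s, tsppGap q r t := by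
  have e1 := sum_range_add_mul_div (a := r + 1) (b := 2) (q := q) (s := s) two_pos
    (fun t ht => by omega)
  have e2 := sum_range_add_mul_div (a := 0) (b := 2) (q := q) (s := s) two_pos
    (fun t ht => by omega)
  have e3 := sum_range_add_mul_div (a := 1) (b := 3) (q := q) (s := s) three_pos
    (fun t ht => by omega)
  have e4 := sum_range_add_mul_div (a := r) (b := 1) (q := q) (s := s) one_pos
    (fun t ht => by omega)
  simp only [add_right_comm r 1, zero_add, add_comm 1 (3 * _), one_mul] at e1 e2 e3 e4
  simp only [tsppGap, sum_sub_distrib, ← Nat.cast_sum, sum_add_distrib, e1, e2, e3, e4,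
    sub_nonneg, Nat.cast_le]
  rcases hs with rfl | rfl <;> omega

theorem sum_range_period_tsppGap_nonneg (hq : 0 < q) (n : ℕ) :
    0 ≤ ∑ t ∈ range q, tsppGap q n t := by
  rw [← (periodic_tsppGap_left hq).map_mod_nat n]
  exact sum_range_tsppGap_nonneg_of_lt (Nat.mod_lt n hq) (Or.inr rfl)

theorem sum_range_tsppGap_nonneg (hq : 0 < q) (n : ℕ) : 0 ≤ ∑ t ∈ range n, tsppGap q n t := by
  induction n using Nat.strong_induction_on with
  | _ n ih =>
    rcases lt_or_ge n q with hnq | hnq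
    · exact sum_range_tsppGap_nonneg_of_lt hnq (Or.inl rfl)
    · obtain ⟨m, rfl⟩ := Nat.exists_eq_add_of_le hnq
      rw [add_comm q m, periodic_tsppGap_left hq m, add_comm, (periodic_tsppGap hq m).sum_range_add]
      exact add_nonneg (sum_range_period_tsppGap_nonneg hq m) (ih m (by omega))

theorem sum_range_tspp_div_le (hq : 0 < q) (n : ℕ) :
    ∑ t ∈ range n, ((3 * t + 1) / q + (n + t) / q) ≤
      ∑ t ∈ range n, ((n + 2 * t + 1) / q + 2 * t / q) := by
  have h := sum_range_tsppGap_nonneg hq n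
  simp only [tsppGap, sum_sub_distrib, ← Nat.cast_sum, sub_nonneg, Nat.cast_le] at h
  exact h

end

theorem prod_factorial_dvd_prod_factorial_tspp (n : ℕ) :
    ∏ t ∈ range n, ((3 * t + 1)! * (n + t)!) ∣ ∏ t ∈ range n, ((n + 2 * t + 1)! * (2 * t)!) := by
  simpa only [prod_mul_distrib, prod_disjSum, Sum.elim_inl, Sum.elim_inr] using
    Nat.prod_factorial_dvd_prod_factorial (s := (range n).disjSum (range n))
      (t := (range n).disjSum (range n))
      (a := Sum.elim (fun t => 3 * t + 1) (fun t => n + t))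
      (b := Sum.elim (fun t => n + 2 * t + 1) (fun t => 2 * t))
      fun q hq => by
        simpa only [sum_disjSum, Sum.elim_inl, Sum.elim_inr, sum_add_distrib] using
          sum_range_tspp_div_le hq n

theorem tspp_product_is_positive_integer_general (n : ℕ) :
    ∃ m : ℕ, 0 < m ∧ tsppProd n = (m : ℚ) := by
  obtain ⟨m, hm⟩ := prod_factorial_dvd_prod_factorial_tspp n
  have hnum : 0 < ∏ t ∈ range n, ((n + 2 * t + 1)! * (2 * t)!) := by positivity
  refine ⟨m, Nat.pos_of_mul_pos_left (hm ▸ hnum), ?_⟩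
  rw [tsppProd_eq_div, hm, Nat.cast_mul, mul_div_cancel_left₀ _ (by positivity)]

/-- For every positive integer `n`, the product
`∏_{1 ≤ i ≤ j ≤ k ≤ n} (i+j+k-1)/(i+j+k-2)` is a positive integer. -/
theorem tspp_product_is_positive_integer (n : ℕ) (hn : 1 ≤ n) :
    ∃ m : ℕ, 0 < m ∧ tsppProd n = (m : ℚ) :=
  tspp_product_is_positive_integer_general n
end

section
/- For every integer n ≥ 1, ∏_{1 ≤ i ≤ j ≤ n} (i+j+n−1)/(i+j+n−2) = (3n−1)/(3n−2) · (2n)_{n−1}/((n/2)_{n−1} · 2^{n−1}). -/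
/-- The rising factorial (Pochhammer symbol) `(x)_m = x(x+1)⋯(x+m-1)` over ℚ. -/
def risingFac (x : ℚ) (m : ℕ) : ℚ := ∏ i ∈ Finset.range m, (x + i)

/-- Telescoping product. -/
lemma tel (c : ℚ) (hc : 0 < c) : ∀ m : ℕ,
    (∏ i ∈ Finset.Icc 1 m, (((i : ℚ) + c) / ((i : ℚ) + c - 1))) = ((m : ℚ) + c) / c := by
  intro m
  induction m with
  | zero => simp [div_self hc.ne']
  | succ m ih =>
    rw [Finset.prod_Icc_succ_top (by omega), ih]
    have h1 : (m : ℚ) + c ≠ 0 := by positivity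
    have h2 : c ≠ 0 := ne_of_gt hc
    push_cast
    have h3 : (m : ℚ) + 1 + c - 1 = (m : ℚ) + c := by ring
    rw [h3]
    field_simp

/-- Even/odd interleaving of a product. -/
lemma interleave (x : ℚ) : ∀ m : ℕ,
    (∏ k ∈ Finset.range (2 * m + 1), (x + k)) =
      (∏ i ∈ Finset.range (m + 1), (x + 2 * i)) *
        (∏ i ∈ Finset.range m, (x + 2 * i + 1)) := by
  intro m
  induction m with
  | zero => simp
  | succ m ih =>
    have h : 2 * (m + 1) + 1 = (2 * m + 1) + 1 + 1 := by ring
    rw [h, Finset.prod_range_succ, Finset.prod_range_succ, ih,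
      Finset.prod_range_succ (fun i => x + 2 * i) (m + 1),
      Finset.prod_range_succ (fun i => x + 2 * i + 1) m]
    push_cast
    ring

/-- For every integer `n ≥ 1`,
`∏_{1 ≤ i ≤ j ≤ n} (i+j+n-1)/(i+j+n-2)
  = (3n-1)/(3n-2) · (2n)_{n-1}/((n/2)_{n-1} · 2^{n-1})`. -/
theorem layer_product_closed_form (n : ℕ) (hn : 1 ≤ n) :
    (∏ j ∈ Finset.Icc 1 n, ∏ i ∈ Finset.Icc 1 j,
        (((i : ℚ) + j + n - 1) / ((i : ℚ) + j + n - 2))) =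
      ((3 * (n : ℚ) - 1) / (3 * (n : ℚ) - 2)) *
        (risingFac (2 * n) (n - 1) / (risingFac ((n : ℚ) / 2) (n - 1) * 2 ^ (n - 1))) := by
  set x : ℚ := (n : ℚ) with hx
  have hx1 : (1 : ℚ) ≤ x := by rw [hx]; exact_mod_cast hn
  have hcast : ((n - 1 : ℕ) : ℚ) = x - 1 := by
    rw [Nat.cast_sub hn]; norm_num; exact hx.symm
  -- Step 1: inner telescoping
  have step1 : (∏ j ∈ Finset.Icc 1 n, ∏ i ∈ Finset.Icc 1 j,
      (((i : ℚ) + j + n - 1) / ((i : ℚ) + j + n - 2))) =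
      ∏ j ∈ Finset.Icc 1 n, ((2 * (j : ℚ) + x - 1) / ((j : ℚ) + x - 1)) := by
    apply Finset.prod_congr rfl
    intro j hj
    have hj1 : 1 ≤ j := (Finset.mem_Icc.mp hj).1
    have hjq : (1 : ℚ) ≤ (j : ℚ) := by exact_mod_cast hj1
    have hc : (0 : ℚ) < (j : ℚ) + x - 1 := by linarith
    have ht := tel ((j : ℚ) + x - 1) hc j
    have h2 : ((j : ℚ) + ((j : ℚ) + x - 1)) / ((j : ℚ) + x - 1)
        = (2 * (j : ℚ) + x - 1) / ((j : ℚ) + x - 1) := by ring_nf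
    rw [h2] at ht
    rw [← ht]
    apply Finset.prod_congr rfl
    intro i _
    ring_nf
    rw [hx]
  rw [step1]
  -- Step 2: rewrite as a ratio of products over range n
  have step2 : (∏ j ∈ Finset.Icc 1 n, ((2 * (j : ℚ) + x - 1) / ((j : ℚ) + x - 1))) =
      (∏ i ∈ Finset.range n, (x + 2 * i + 1)) / (∏ i ∈ Finset.range n, (x + i)) := by
    rw [← Finset.Ico_add_one_right_eq_Icc, Finset.prod_Ico_eq_prod_range, Finset.prod_div_distrib]
    congr 1
    · apply Finset.prod_congr rfl; intro i _; push_cast; ring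
    · apply Finset.prod_congr rfl; intro i _; push_cast; ring
  rw [step2]
  -- Notation
  set A' : ℚ := ∏ i ∈ Finset.range (n - 1), (x + 2 * i + 1) with hA'
  set D : ℚ := ∏ i ∈ Finset.range (n - 1), (x + 2 * i) with hD
  set B : ℚ := ∏ i ∈ Finset.range n, (x + i) with hB
  set C : ℚ := ∏ i ∈ Finset.range (n - 1), (2 * x + i) with hC
  -- Rising factorials in terms of products
  have hRC : risingFac (2 * (n : ℚ)) (n - 1) = C := by
    rw [risingFac, hC]
  have hRD : risingFac ((n : ℚ) / 2) (n - 1) * 2 ^ (n - 1) = D := by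
    rw [risingFac, hD,
      show (2 : ℚ) ^ (n - 1) = ∏ _i ∈ Finset.range (n - 1), (2 : ℚ) by simp,
      ← Finset.prod_mul_distrib]
    apply Finset.prod_congr rfl
    intro i _
    rw [← hx]; ring
  rw [hRC, hRD]
  -- peel the top factor of A
  have hA : (∏ i ∈ Finset.range n, (x + 2 * i + 1)) = A' * (3 * x - 1) := by
    rw [show n = (n - 1) + 1 by omega, Finset.prod_range_succ, hcast]
    ring
  -- the key product identity
  have hBC : B * C = D * (3 * x - 2) * A' := by
    have h1 := Finset.prod_range_add (fun k => x + (k : ℚ)) n (n - 1)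
    have h2 := interleave x (n - 1)
    rw [show n - 1 + 1 = n by omega] at h2
    rw [show n + (n - 1) = 2 * (n - 1) + 1 by omega, h2] at h1
    have h3 : (∏ i ∈ Finset.range n, (x + 2 * i)) = D * (3 * x - 2) := by
      rw [show n = (n - 1) + 1 by omega, Finset.prod_range_succ, hcast]
      ring
    have h4 : (∏ i ∈ Finset.range (n - 1), (x + ((n + i : ℕ) : ℚ))) = C := by
      rw [hC]
      apply Finset.prod_congr rfl
      intro i _
      push_cast
      try rw [← hx]
      try ring
    rw [h3, ← hA'] at h1
    rw [hB, h4.symm, h1]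
    try ring
  -- positivity
  have hBpos : (0 : ℚ) < B := by
    rw [hB]; apply Finset.prod_pos; intro i _
    have : (0 : ℚ) ≤ (i : ℚ) := by positivity
    linarith
  have hDpos : (0 : ℚ) < D := by
    rw [hD]; apply Finset.prod_pos; intro i _
    have : (0 : ℚ) ≤ (i : ℚ) := by positivity
    linarith
  have h32 : (0 : ℚ) < 3 * x - 2 := by linarith
  rw [hA]
  field_simp [hBpos.ne', hDpos.ne', h32.ne']
  linear_combination -(3 * x - 1) * hBC
end
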